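/- For the parametrized problem min_x cᵀx + ε‖x‖² subject to Gx ≤ h, Ex = q(d), where q is affine in d and ε > 0, the optimal solution map x*(d) is Lipschitz continuous on the set of d for which the problem is feasible. -/

import Mathlib

/-!
After completing the square, `x*(d)` is the Euclidean projection of `z = -c/(2ε)` onto the
polyhedron `P(b) = {x | Gx ≤ h, Ex = b}` with `b = q(d)`, so it suffices to show that this
projection is Lipschitz in `b`. The projection `x` satisfies `x - z ⊥ ker [E; G_J]`,
where `J` is its active set; hence two projections with the same active set `J` differ by a vector
of `(ker [E; G_J])ᗮ` whose image under `[E; G_J]` is `(b₁ - b₂, 0)`, and are `C_J ‖b₁ - b₂‖`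
apart. For different active sets, follow the projection along the segment from `b₁` to `b₂`:
it is continuous there (the graph of the constraint sets over the segment is convex and closed),
and the segment is covered by the finitely many closed sets on which one `C_J` applies.
-/

open scoped RealInnerProductSpace NNReal
open Set Filter Topology AffineMap

theorem ConvexOn.exists_le_add_mul_abs_sub {g : ℝ → ℝ} {a b t : ℝ} (hg : ConvexOn ℝ (Icc a b) g)
    (ht : t ∈ Icc a b) : ∃ K, ∀ s ∈ Icc a b, g s ≤ g t + K * |s - t| := by
  refine ⟨max ((g b - g t) / (b - t)) (-((g a - g t) / (a - t))), fun s hs => ?_⟩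
  rcases lt_trichotomy s t with hst | rfl | hts
  · have hsec := hg.secant_mono ht (left_mem_Icc.2 (hs.1.trans hs.2)) hs
      (hs.1.trans_lt hst).ne hst.ne hs.1
    rw [le_div_iff_of_neg (sub_neg.2 hst)] at hsec
    rw [abs_of_neg (sub_neg.2 hst)]
    nlinarith [le_max_right ((g b - g t) / (b - t)) (-((g a - g t) / (a - t)))]
  · simp
  · have hsec := hg.secant_mono ht hs (right_mem_Icc.2 (hs.1.trans hs.2)) hts.ne'
      (hts.trans_le hs.2).ne' hs.2
    rw [div_le_iff₀ (sub_pos.2 hts)] at hsec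
    rw [abs_of_pos (sub_pos.2 hts)]
    nlinarith [le_max_left ((g b - g t) / (b - t)) (-((g a - g t) / (a - t)))]

theorem LipschitzOnWith.Icc_of_isClosed_cover {Y ι : Type*} [PseudoMetricSpace Y] [Finite ι]
    {f : ℝ → Y} {K : ℝ≥0} {a b : ℝ} {T : ι → Set ℝ} (hT : ∀ i, IsClosed (T i))
    (hcover : Icc a b ⊆ ⋃ i, T i) (hfT : ∀ i, LipschitzOnWith K f (T i))
    (hf : ContinuousOn f (Icc a b)) : LipschitzOnWith K f (Icc a b) := by
  have hloc (t : ℝ) : ∀ᶠ s in 𝓝 t, s ∈ Icc a b → ∃ i, t ∈ T i ∧ s ∈ T i := by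
    have : ∀ᶠ s in 𝓝 t, ∀ i, s ∈ T i → t ∈ T i := eventually_all.2 fun i => by
      by_cases ht : t ∈ T i
      · exact Eventually.of_forall fun _ _ => ht
      · filter_upwards [(hT i).isOpen_compl.mem_nhds ht] with s hs hs' using absurd hs' hs
    filter_upwards [this] with s hs hsI
    obtain ⟨i, hi⟩ := mem_iUnion.1 (hcover hsI)
    exact ⟨i, hs i hi, hi⟩
  have hmono : ∀ x ∈ Icc a b, ∀ y ∈ Icc x b, dist (f x) (f y) ≤ K * (y - x) := by
    intro x hx
    let A : Set ℝ := {y | dist (f x) (f y) ≤ K * (y - x)}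
    have hcl : IsClosed (A ∩ Icc x b) := by
      rw [inter_comm]
      exact isClosed_Icc.isClosed_le
        (continuous_dist.comp_continuousOn (continuousOn_const.prodMk
          (hf.mono (Icc_subset_Icc_left hx.1))))
        (by fun_prop)
    refine IsClosed.Icc_subset_of_forall_mem_nhdsWithin (s := A) hcl
      (show dist (f x) (f x) ≤ K * (x - x) by simp) ?_
    rintro y ⟨hy, hxy, hyb⟩
    filter_upwards [nhdsWithin_le_nhds (hloc y), Ioc_mem_nhdsGT hyb] with s hs hsy
    obtain ⟨i, hyi, hsi⟩ := hs ⟨hx.1.trans (hxy.trans hsy.1.le), hsy.2⟩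
    have hys := (hfT i).dist_le_mul y hyi s hsi
    rw [Real.dist_eq, abs_sub_comm, abs_of_pos (sub_pos.2 hsy.1)] at hys
    calc dist (f x) (f s) ≤ dist (f x) (f y) + dist (f y) (f s) := dist_triangle _ _ _
      _ ≤ K * (y - x) + K * (s - y) := add_le_add hy hys
      _ = K * (s - x) := by ring
  refine LipschitzOnWith.of_dist_le_mul fun x hx y hy => ?_
  rcases le_total x y with hxy | hyx
  · rw [Real.dist_eq, abs_sub_comm, abs_of_nonneg (sub_nonneg.2 hxy)]
    exact hmono x hx y ⟨hxy, hy.2⟩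
  · rw [dist_comm, Real.dist_eq, abs_of_nonneg (sub_nonneg.2 hyx)]
    exact hmono y hy x ⟨hyx, hx.2⟩

section InnerProductSpace

variable {X : Type*} [NormedAddCommGroup X] [InnerProductSpace ℝ X]

theorem IsMinOn.norm_sub_of_inner_add_mul_norm_sq {K : Set X} {c x : X} {ε : ℝ} (hε : 0 < ε)
    (hx : IsMinOn (fun y => ⟪c, y⟫ + ε * ‖y‖ ^ 2) K x) :
    IsMinOn (‖· - (-(2 * ε)⁻¹) • c‖) K x := by
  have hsq (y : X) : ⟪c, y⟫ + ε * ‖y‖ ^ 2 =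
      ε * ‖y - (-(2 * ε)⁻¹) • c‖ ^ 2 - ε * ‖(2 * ε)⁻¹ • c‖ ^ 2 := by
    rw [neg_smul, sub_neg_eq_add, norm_add_sq_real, inner_smul_right, real_inner_comm]
    field_simp
    ring
  refine isMinOn_iff.2 fun y hy => ?_
  have := isMinOn_iff.1 hx y hy
  rw [hsq, hsq] at this
  exact pow_le_pow_iff_left₀ (norm_nonneg _) (norm_nonneg _) two_ne_zero |>.1 (by nlinarith)

theorem eq_of_isMinOn_norm_sub {K : Set X} (hK : Convex ℝ K) {x y z : X} (hx : x ∈ K)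
    (hmin : IsMinOn (‖· - z‖) K x) (hy : y ∈ K) (hyz : ‖y - z‖ ≤ ‖x - z‖) : y = x := by
  have hmid : ‖x - z‖ ≤ ‖(2⁻¹ : ℝ) • ((y - z) + (x - z))‖ := by
    have := isMinOn_iff.1 hmin _
      (hK hy hx (by norm_num : (0 : ℝ) ≤ 2⁻¹) (by norm_num : (0 : ℝ) ≤ 2⁻¹) (by norm_num))
    rwa [show (2⁻¹ : ℝ) • y + (2⁻¹ : ℝ) • x - z = (2⁻¹ : ℝ) • ((y - z) + (x - z)) by module]
      at this
  have hpar := parallelogram_law_with_norm ℝ (y - z) (x - z)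
  rw [norm_smul, Real.norm_of_nonneg (by norm_num)] at hmid
  rw [← sub_eq_zero, ← norm_eq_zero, ← sub_sub_sub_cancel_right y x z]
  have hyx := pow_le_pow_left₀ (norm_nonneg _) hyz 2
  have : ‖y - z - (x - z)‖ ^ 2 ≤ 0 := by nlinarith [norm_nonneg (x - z)]
  exact pow_eq_zero_iff two_ne_zero |>.1 (le_antisymm this (sq_nonneg _))

theorem inner_sub_eq_zero_of_isMinOn {K : Set X} {x z v : X} (hmin : IsMinOn (‖· - z‖) K x)
    (hv : ∀ᶠ δ : ℝ in 𝓝 0, x + δ • v ∈ K) : ⟪x - z, v⟫ = 0 := by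
  have hloc : IsLocalMin (fun δ : ℝ => ‖x + δ • v - z‖ ^ 2) 0 :=
    hv.mono fun δ hδ => by
      simpa using pow_le_pow_left₀ (norm_nonneg _) (isMinOn_iff.1 hmin _ hδ) 2
  have hderiv : HasDerivAt (fun δ : ℝ => ‖x + δ • v - z‖ ^ 2)
      (2 * ⟪x + (0 : ℝ) • v - z, (1 : ℝ) • v⟫) 0 :=
    (((hasDerivAt_id (0 : ℝ)).smul_const v).const_add x |>.sub_const z).norm_sq
  simpa using hloc.hasDerivAt_eq_zero hderiv

theorem exists_isMinOn_norm_sub [CompleteSpace X] {K : Set X} (hne : K.Nonempty)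
    (hK : IsClosed K) (hKc : Convex ℝ K) (z : X) : ∃ x ∈ K, IsMinOn (‖· - z‖) K x := by
  obtain ⟨x, hx, hxz⟩ := exists_norm_eq_iInf_of_complete_convex hne hK.isComplete hKc z
  refine ⟨x, hx, isMinOn_iff.2 fun y hy => ?_⟩
  rw [norm_sub_rev, hxz, norm_sub_rev]
  exact ciInf_le ⟨0, forall_mem_range.2 fun _ => norm_nonneg _⟩ (⟨y, hy⟩ : K)

theorem exists_norm_le_mul_norm_of_mem_orthogonal_ker [FiniteDimensional ℝ X] {Y : Type*}
    [NormedAddCommGroup Y] [NormedSpace ℝ Y] (Φ : X →ₗ[ℝ] Y) :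
    ∃ C, ∀ w ∈ (LinearMap.ker Φ)ᗮ, ‖w‖ ≤ C * ‖Φ w‖ := by
  have hinj : LinearMap.ker (Φ.comp (LinearMap.ker Φ)ᗮ.subtype) = ⊥ := by
    rw [LinearMap.ker_eq_bot']
    intro w hw
    have : (w : X) ∈ LinearMap.ker Φ ⊓ (LinearMap.ker Φ)ᗮ := ⟨hw, w.2⟩
    rw [Submodule.inf_orthogonal_eq_bot] at this
    exact Subtype.ext this
  obtain ⟨C, -, hC⟩ := LinearMap.exists_antilipschitzWith _ hinj
  exact ⟨C, fun w hw => hC.le_mul_norm (map_zero _) ⟨w, hw⟩⟩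

theorem continuousOn_of_isMinOn_norm_sub [FiniteDimensional ℝ X] {C : ℝ → Set X} {z : X}
    {f : ℝ → X} {a b : ℝ} (hconv : Convex ℝ {p : ℝ × X | p.1 ∈ Icc a b ∧ p.2 ∈ C p.1})
    (hclosed : IsClosed {p : ℝ × X | p.1 ∈ Icc a b ∧ p.2 ∈ C p.1})
    (hf : ∀ t ∈ Icc a b, f t ∈ C t ∧ IsMinOn (‖· - z‖) (C t) (f t)) :
    ContinuousOn f (Icc a b) := by
  have hval : ConvexOn ℝ (Icc a b) (‖f · - z‖) := by
    refine ⟨convex_Icc a b, fun s hs t ht μ ν hμ hν hμν => ?_⟩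
    have hmem := (hconv (show (s, f s) ∈ _ from ⟨hs, (hf s hs).1⟩)
      (show (t, f t) ∈ _ from ⟨ht, (hf t ht).1⟩) hμ hν hμν).2
    simp only [Prod.smul_mk, Prod.mk_add_mk, smul_eq_mul] at hmem
    calc ‖f (μ * s + ν * t) - z‖ ≤ ‖μ • f s + ν • f t - z‖ :=
          isMinOn_iff.1 (hf _ (convex_Icc a b hs ht hμ hν hμν)).2 _ hmem
      _ = ‖μ • (f s - z) + ν • (f t - z)‖ := by
          rw [smul_sub, smul_sub, sub_add_sub_comm, ← add_smul, hμν, one_smul]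
      _ ≤ μ * ‖f s - z‖ + ν * ‖f t - z‖ := by
          refine (norm_add_le _ _).trans ?_
          rw [norm_smul, norm_smul, Real.norm_of_nonneg hμ, Real.norm_of_nonneg hν]
  intro t ht
  obtain ⟨K, hK⟩ := hval.exists_le_add_mul_abs_sub ht
  have hfiber : Convex ℝ (C t) := fun x hx y hy μ ν hμ hν hμν => by
    simpa [← add_mul, hμν] using
      (hconv (show (t, x) ∈ _ from ⟨ht, hx⟩) (show (t, y) ∈ _ from ⟨ht, hy⟩) hμ hν hμν).2
  -- `f` stays in a compact ball, and a cluster point at `t` lies in `C t` (closed graph) and is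
  -- no farther from `z` than `f t` (upper bound from convexity), so it is `f t`
  apply (isCompact_closedBall z (max ‖f a - z‖ ‖f b - z‖)).tendsto_nhds_of_unique_mapClusterPt
  · filter_upwards [self_mem_nhdsWithin] with s hs
    rw [Metric.mem_closedBall, dist_eq_norm]
    exact hval.le_max_of_mem_Icc (left_mem_Icc.2 (hs.1.trans hs.2))
      (right_mem_Icc.2 (hs.1.trans hs.2)) hs
  intro x _ hx
  obtain ⟨U, hUl, hU⟩ := mapClusterPt_iff_ultrafilter.1 hx
  have hIcc : ∀ᶠ s in (U : Filter ℝ), s ∈ Icc a b := hUl self_mem_nhdsWithin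
  have hUt : Tendsto id (U : Filter ℝ) (𝓝 t) := tendsto_id.mono_left (hUl.trans nhdsWithin_le_nhds)
  have hxC : x ∈ C t := (hclosed.mem_of_tendsto (hUt.prodMk_nhds hU)
    (hIcc.mono fun s hs => ⟨hs, (hf s hs).1⟩)).2
  have hxz : ‖x - z‖ ≤ ‖f t - z‖ := by
    refine le_of_tendsto_of_tendsto (hU.sub_const z).norm ?_ (hIcc.mono hK)
    simpa using (((hUt.sub_const t).abs).const_mul K).const_add ‖f t - z‖
  exact eq_of_isMinOn_norm_sub hfiber (hf t ht).1 (hf t ht).2 hxC hxz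

section Polyhedron

variable {ι F : Type*} [NormedAddCommGroup F] [NormedSpace ℝ F]
  (G : X →ₗ[ℝ] ι → ℝ) (h : ι → ℝ) (E : X →ₗ[ℝ] F)

def polyhedron (b : F) : Set X := {x | G x ≤ h ∧ E x = b}

def activeConstraintMap (J : Finset ι) : X →ₗ[ℝ] F × (J → ℝ) :=
  E.prod ((LinearMap.funLeft ℝ ℝ Subtype.val).comp G)

variable {G h E}

theorem convex_polyhedron (b : F) : Convex ℝ (polyhedron G h E b) := by
  intro x hx y hy μ ν hμ hν hμν
  refine ⟨?_, ?_⟩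
  · simpa only [map_add, map_smul, mem_Iic] using convex_Iic h hx.1 hy.1 hμ hν hμν
  · rw [map_add, map_smul, map_smul, hx.2, hy.2, ← add_smul, hμν, one_smul]

theorem isClosed_polyhedron [FiniteDimensional ℝ X] (b : F) :
    IsClosed (polyhedron G h E b) :=
  (isClosed_le G.continuous_of_finiteDimensional continuous_const).inter
    (isClosed_eq E.continuous_of_finiteDimensional continuous_const)

theorem convex_polyhedron_lineMap_graph (b₁ b₂ : F) :
    Convex ℝ {p : ℝ × X | p.1 ∈ Icc 0 1 ∧ p.2 ∈ polyhedron G h E (lineMap b₁ b₂ p.1)} := by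
  intro p hp q hq μ ν hμ hν hμν
  refine ⟨convex_Icc 0 1 hp.1 hq.1 hμ hν hμν, ?_, ?_⟩
  · simpa only [Prod.snd_add, Prod.smul_snd, map_add, map_smul, mem_Iic]
      using convex_Iic h hp.2.1 hq.2.1 hμ hν hμν
  · rw [Prod.fst_add, Prod.smul_fst, Prod.smul_fst, Prod.snd_add, Prod.smul_snd, Prod.smul_snd,
      Convex.combo_affine_apply hμν, map_add, map_smul, map_smul, hp.2.2, hq.2.2]

theorem isClosed_polyhedron_lineMap_graph [FiniteDimensional ℝ X] (b₁ b₂ : F) :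
    IsClosed {p : ℝ × X | p.1 ∈ Icc 0 1 ∧ p.2 ∈ polyhedron G h E (lineMap b₁ b₂ p.1)} :=
  (isClosed_Icc.preimage continuous_fst).inter
    ((isClosed_le (G.continuous_of_finiteDimensional.comp continuous_snd) continuous_const).inter
      (isClosed_eq (E.continuous_of_finiteDimensional.comp continuous_snd)
        (lineMap_continuous.comp continuous_fst)))

theorem eventually_add_smul_mem_polyhedron [Finite ι] {b : F} {x v : X}
    (hx : x ∈ polyhedron G h E b) (hEv : E v = 0) (hGv : ∀ i, G x i = h i → G v i = 0) :
    ∀ᶠ δ : ℝ in 𝓝 0, x + δ • v ∈ polyhedron G h E b := by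
  have hG (i : ι) : ∀ᶠ δ : ℝ in 𝓝 0, G x i + δ * G v i ≤ h i := by
    rcases (hx.1 i).eq_or_lt with hi | hi
    · exact Eventually.of_forall fun δ => by rw [hGv i hi, mul_zero, add_zero, hi]
    · have hcont : Continuous fun δ : ℝ => G x i + δ * G v i := by fun_prop
      exact (hcont.continuousAt.eventually_lt continuousAt_const (by simpa using hi)).mono
        fun _ => le_of_lt
  filter_upwards [eventually_all.2 hG] with δ hδ
  exact ⟨fun i => by simpa using hδ i, by simp [hx.2, hEv]⟩

theorem sub_mem_orthogonal_ker_activeConstraintMap [Fintype ι] {b : F} {x z : X}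
    (hx : x ∈ polyhedron G h E b) (hmin : IsMinOn (‖· - z‖) (polyhedron G h E b) x) :
    x - z ∈ (LinearMap.ker (activeConstraintMap G E {i | G x i = h i}))ᗮ := by
  refine (Submodule.mem_orthogonal' _ _).2 fun v hv => ?_
  simp only [LinearMap.mem_ker, activeConstraintMap, LinearMap.prod_apply, Function.prod,
    Prod.mk_eq_zero, funext_iff] at hv
  exact inner_sub_eq_zero_of_isMinOn hmin
    (eventually_add_smul_mem_polyhedron hx hv.1 fun i hi => hv.2 ⟨i, by simpa using hi⟩)

theorem norm_sub_le_of_mem_orthogonal_ker_activeConstraintMap {J : Finset ι} {C : ℝ}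
    (hC : ∀ w ∈ (LinearMap.ker (activeConstraintMap G E J))ᗮ,
      ‖w‖ ≤ C * ‖activeConstraintMap G E J w‖)
    {x₁ x₂ z : X} (hJ₁ : ∀ i ∈ J, G x₁ i = h i) (hJ₂ : ∀ i ∈ J, G x₂ i = h i)
    (h₁ : x₁ - z ∈ (LinearMap.ker (activeConstraintMap G E J))ᗮ)
    (h₂ : x₂ - z ∈ (LinearMap.ker (activeConstraintMap G E J))ᗮ) :
    ‖x₁ - x₂‖ ≤ C * ‖E x₁ - E x₂‖ := by
  have hΦ : activeConstraintMap G E J (x₁ - x₂) = (E x₁ - E x₂, 0) := by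
    ext i
    · simp [activeConstraintMap]
    · simp [activeConstraintMap, hJ₁ i i.2, hJ₂ i i.2]
  have := hC _ (by simpa using Submodule.sub_mem _ h₁ h₂)
  rwa [hΦ, Prod.norm_def, norm_zero, max_eq_left (norm_nonneg _)] at this

theorem lipschitzOnWith_of_isMinOn_polyhedron_lineMap [Fintype ι] [FiniteDimensional ℝ X]
    {C : ℝ≥0} (hC : ∀ J : Finset ι, ∀ w ∈ (LinearMap.ker (activeConstraintMap G E J))ᗮ,
      ‖w‖ ≤ C * ‖activeConstraintMap G E J w‖)
    {z : X} {b₁ b₂ : F} {f : ℝ → X} (hf : ∀ t ∈ Icc (0 : ℝ) 1,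
      f t ∈ polyhedron G h E (lineMap b₁ b₂ t) ∧
        IsMinOn (‖· - z‖) (polyhedron G h E (lineMap b₁ b₂ t)) (f t)) :
    LipschitzOnWith (C * ‖b₁ - b₂‖₊) f (Icc 0 1) := by
  have hcont := continuousOn_of_isMinOn_norm_sub (convex_polyhedron_lineMap_graph b₁ b₂)
    (isClosed_polyhedron_lineMap_graph b₁ b₂) hf
  let T (J : Finset ι) : Set ℝ := Icc 0 1 ∩
    f ⁻¹' {x | (∀ i ∈ J, G x i = h i) ∧ x - z ∈ (LinearMap.ker (activeConstraintMap G E J))ᗮ}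
  refine LipschitzOnWith.Icc_of_isClosed_cover (T := T) (fun J => ?_) (fun t ht => ?_)
    (fun J => ?_) hcont
  · have hJ : IsClosed {x : X | ∀ i ∈ J, G x i = h i} := by
      simp only [Set.ofPred_forall]
      exact isClosed_iInter fun i => isClosed_iInter fun _ =>
        isClosed_eq ((continuous_apply i).comp G.continuous_of_finiteDimensional) continuous_const
    exact hcont.preimage_isClosed_of_isClosed isClosed_Icc (hJ.inter
      ((Submodule.isClosed_orthogonal _).preimage (continuous_id.sub continuous_const)))
  · exact mem_iUnion.2 ⟨_, ht, fun i hi => by simpa using hi,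
      sub_mem_orthogonal_ker_activeConstraintMap (hf t ht).1 (hf t ht).2⟩
  · refine LipschitzOnWith.of_dist_le_mul fun s hs t ht => ?_
    have := norm_sub_le_of_mem_orthogonal_ker_activeConstraintMap (hC J) hs.2.1 ht.2.1
      hs.2.2 ht.2.2
    rw [(hf s hs.1).1.2, (hf t ht.1).1.2, ← dist_eq_norm, ← dist_eq_norm,
      dist_lineMap_lineMap] at this
    exact this.trans_eq (by push_cast; rw [dist_eq_norm b₁]; ring)

variable (G h E)

theorem exists_norm_sub_le_of_isMinOn_polyhedron [Fintype ι] [FiniteDimensional ℝ X] :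
    ∃ C : ℝ≥0, ∀ (z : X) (b₁ b₂ : F) (x₁ x₂ : X),
      x₁ ∈ polyhedron G h E b₁ → IsMinOn (‖· - z‖) (polyhedron G h E b₁) x₁ →
      x₂ ∈ polyhedron G h E b₂ → IsMinOn (‖· - z‖) (polyhedron G h E b₂) x₂ →
      ‖x₁ - x₂‖ ≤ C * ‖b₁ - b₂‖ := by
  choose CJ hCJ using fun J : Finset ι =>
    exists_norm_le_mul_norm_of_mem_orthogonal_ker (activeConstraintMap G E J)
  obtain ⟨M, hM⟩ := Finite.exists_le CJ
  refine ⟨M.toNNReal, fun z b₁ b₂ x₁ x₂ hx₁ hm₁ hx₂ hm₂ => ?_⟩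
  have hC (J : Finset ι) (w) (hw : w ∈ (LinearMap.ker (activeConstraintMap G E J))ᗮ) :
      ‖w‖ ≤ M.toNNReal * ‖activeConstraintMap G E J w‖ :=
    (hCJ J w hw).trans (mul_le_mul_of_nonneg_right ((hM J).trans (Real.le_coe_toNNReal M))
      (norm_nonneg _))
  have hproj (t : ℝ) (ht : t ∈ Icc (0 : ℝ) 1) : ∃ x ∈ polyhedron G h E (lineMap b₁ b₂ t),
      IsMinOn (‖· - z‖) (polyhedron G h E (lineMap b₁ b₂ t)) x := by
    refine exists_isMinOn_norm_sub ⟨(1 - t) • x₁ + t • x₂, ?_⟩ (isClosed_polyhedron _)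
      (convex_polyhedron _) z
    simpa using (convex_polyhedron_lineMap_graph b₁ b₂
      (show ((0 : ℝ), x₁) ∈ _ from ⟨by simp, by simpa using hx₁⟩)
      (show ((1 : ℝ), x₂) ∈ _ from ⟨by simp, by simpa using hx₂⟩)
      (sub_nonneg.2 ht.2) ht.1 (sub_add_cancel 1 t)).2
  choose! f hf using hproj
  have h₀ := hf 0 (left_mem_Icc.2 zero_le_one)
  have h₁ := hf 1 (right_mem_Icc.2 zero_le_one)
  rw [lineMap_apply_zero] at h₀
  rw [lineMap_apply_one] at h₁
  have hf₀ := eq_of_isMinOn_norm_sub (convex_polyhedron b₁) hx₁ hm₁ h₀.1 (isMinOn_iff.1 h₀.2 x₁ hx₁)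
  have hf₁ := eq_of_isMinOn_norm_sub (convex_polyhedron b₂) hx₂ hm₂ h₁.1 (isMinOn_iff.1 h₁.2 x₂ hx₂)
  have := (lipschitzOnWith_of_isMinOn_polyhedron_lineMap hC hf).dist_le_mul 0
    (left_mem_Icc.2 zero_le_one) 1 (right_mem_Icc.2 zero_le_one)
  simpa [hf₀, hf₁, dist_eq_norm] using this

end Polyhedron

end InnerProductSpace

def Matrix.mulVecLinEuclidean {m n : Type*} [Fintype n] [DecidableEq n] (M : Matrix m n ℝ) :
    EuclideanSpace ℝ n →ₗ[ℝ] m → ℝ :=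
  M.toLin'.comp (WithLp.linearEquiv 2 ℝ (n → ℝ)).toLinearMap

theorem qp_solution_map_lipschitz_general (n m₁ m₂ p : ℕ)
    (G : Matrix (Fin m₁) (Fin n) ℝ) (h : Fin m₁ → ℝ)
    (E : Matrix (Fin m₂) (Fin n) ℝ)
    (Q : Matrix (Fin m₂) (Fin p) ℝ) (q₀ : Fin m₂ → ℝ)
    (c : EuclideanSpace ℝ (Fin n)) (ε : ℝ) (hε : 0 < ε)
    (S : EuclideanSpace ℝ (Fin p) → Set (EuclideanSpace ℝ (Fin n)))
    (hS : ∀ d, S d = {x : EuclideanSpace ℝ (Fin n) | (∀ i, G.mulVec x i ≤ h i) ∧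
        ∀ j, E.mulVec x j = Q.mulVec d j + q₀ j})
    (Dfeas : Set (EuclideanSpace ℝ (Fin p)))
    (xstar : EuclideanSpace ℝ (Fin p) → EuclideanSpace ℝ (Fin n))
    (hopt : ∀ d ∈ Dfeas, xstar d ∈ S d ∧
      ∀ y ∈ S d, ⟪c, xstar d⟫ + ε * ‖xstar d‖ ^ 2 ≤ ⟪c, y⟫ + ε * ‖y‖ ^ 2) :
    ∃ Lc : ℝ, 0 ≤ Lc ∧ ∀ d ∈ Dfeas, ∀ d' ∈ Dfeas,
      ‖xstar d - xstar d'‖ ≤ Lc * ‖d - d'‖ := by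
  obtain ⟨C, hC⟩ := exists_norm_sub_le_of_isMinOn_polyhedron
    G.mulVecLinEuclidean h E.mulVecLinEuclidean
  let Ql := LinearMap.toContinuousLinearMap Q.mulVecLinEuclidean
  have hS' (d) : S d = polyhedron G.mulVecLinEuclidean h E.mulVecLinEuclidean (Ql d + q₀) := by
    ext x
    simp [hS, polyhedron, Pi.le_def, funext_iff, Ql, Matrix.mulVecLinEuclidean]
  have hproj (d) (hd : d ∈ Dfeas) := (hopt d hd).imp_right
    fun hmin => (isMinOn_iff.2 hmin).norm_sub_of_inner_add_mul_norm_sq hε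
  simp only [hS'] at hproj
  refine ⟨C * ‖Ql‖, by positivity, fun d hd d' hd' => ?_⟩
  calc ‖xstar d - xstar d'‖ ≤ C * ‖(Ql d + q₀) - (Ql d' + q₀)‖ :=
        hC _ _ _ _ _ (hproj d hd).1 (hproj d hd).2 (hproj d' hd').1 (hproj d' hd').2
    _ ≤ C * (‖Ql‖ * ‖d - d'‖) := by
        rw [add_sub_add_right_eq_sub, ← map_sub]
        exact mul_le_mul_of_nonneg_left (Ql.le_opNorm _) C.2
    _ = C * ‖Ql‖ * ‖d - d'‖ := (mul_assoc _ _ _).symm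

/-- For the parametrized strongly convex QP
`min ⟨c,x⟩ + ε‖x‖²  s.t.  Gx ≤ h, Ex = q(d)` with `q` affine and `ε > 0`,
the optimal solution map `d ↦ x*(d)` is Lipschitz on the set of feasible `d`. -/
theorem qp_solution_map_lipschitz (n m₁ m₂ p : ℕ)
    (G : Matrix (Fin m₁) (Fin n) ℝ) (h : Fin m₁ → ℝ)
    (E : Matrix (Fin m₂) (Fin n) ℝ)
    (Q : Matrix (Fin m₂) (Fin p) ℝ) (q₀ : Fin m₂ → ℝ)
    (c : EuclideanSpace ℝ (Fin n)) (ε : ℝ) (hε : 0 < ε)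
    (S : EuclideanSpace ℝ (Fin p) → Set (EuclideanSpace ℝ (Fin n)))
    (hS : ∀ d, S d = {x : EuclideanSpace ℝ (Fin n) | (∀ i, G.mulVec x i ≤ h i) ∧
        ∀ j, E.mulVec x j = Q.mulVec d j + q₀ j})
    (Dfeas : Set (EuclideanSpace ℝ (Fin p)))
    (hDfeas : Dfeas = {d | (S d).Nonempty})
    (xstar : EuclideanSpace ℝ (Fin p) → EuclideanSpace ℝ (Fin n))
    (hopt : ∀ d ∈ Dfeas, xstar d ∈ S d ∧
      ∀ y ∈ S d, ⟪c, xstar d⟫ + ε * ‖xstar d‖ ^ 2 ≤ ⟪c, y⟫ + ε * ‖y‖ ^ 2) :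
    ∃ Lc : ℝ, 0 ≤ Lc ∧ ∀ d ∈ Dfeas, ∀ d' ∈ Dfeas,
      ‖xstar d - xstar d'‖ ≤ Lc * ‖d - d'‖ :=
  qp_solution_map_lipschitz_general n m₁ m₂ p G h E Q q₀ c ε hε S hS Dfeas xstar hopt
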